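/- arXiv:1808.03095 — 4 statements merged into one kernel-verified Lean document; each statement's English description precedes it below -/
import Mathlib

section
/- Let ρ > 0, α > 0 and 0 < a < b < ∞, and let g, h : ℝ → ℝ be continuous on [a, b]. Then ∫_a^b t^{ρ−1} g(t) (^ρI_{a+}^{α} h)(t) dt = ∫_a^b t^{ρ−1} h(t) (^ρI_{b−}^{α} g)(t) dt. -/
open MeasureTheory Real Set Filter

/-- Left-sided Katugampola fractional integral of order `α`:
`(^ρI_{a+}^{α} h)(t) = (1/Γ(α)) ∫_a^t s^(ρ-1) ((t^ρ - s^ρ)/ρ)^(α-1) h(s) ds`. -/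
noncomputable def katI (ρ α a : ℝ) (h : ℝ → ℝ) (t : ℝ) : ℝ :=
  (1 / Real.Gamma α) * ∫ s in a..t, s ^ (ρ - 1) * ((t ^ ρ - s ^ ρ) / ρ) ^ (α - 1) * h s

/-- Right-sided Katugampola fractional integral of order `α`:
`(^ρI_{b-}^{α} h)(t) = (1/Γ(α)) ∫_t^b s^(ρ-1) ((s^ρ - t^ρ)/ρ)^(α-1) h(s) ds`. -/
noncomputable def katIr (ρ α b : ℝ) (h : ℝ → ℝ) (t : ℝ) : ℝ :=
  (1 / Real.Gamma α) * ∫ s in t..b, s ^ (ρ - 1) * ((s ^ ρ - t ^ ρ) / ρ) ^ (α - 1) * h s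

/-- Left-sided Katugampola fractional derivative of order `0 < α < 1`:
`(^ρD_{a+}^{α} h)(t) = t^(ρ-1) ⬝ d/dt (^ρI_{a+}^{1-α} h)(t)`. -/
noncomputable def katD (ρ α a : ℝ) (h : ℝ → ℝ) (t : ℝ) : ℝ :=
  t ^ (ρ - 1) * deriv (katI ρ (1 - α) a h) t

/-- Right-sided Katugampola fractional derivative of order `0 < α < 1`:
`(^ρD_{b-}^{α} h)(t) = -t^(ρ-1) ⬝ d/dt (^ρI_{b-}^{1-α} h)(t)`. -/
noncomputable def katDr (ρ α b : ℝ) (h : ℝ → ℝ) (t : ℝ) : ℝ :=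
  -(t ^ (ρ - 1) * deriv (katIr ρ (1 - α) b h) t)

/-- Generalized Katugampola fractional derivative of order `0 < α < 1` and type `0 ≤ β ≤ 1`:
`(^ρD_{a+}^{α,β} h)(t) = (^ρI_{a+}^{β(1-α)} (δ_ρ (^ρI_{a+}^{(1-β)(1-α)} h)))(t)`,
where `(δ_ρ f)(t) = t^(ρ-1) f'(t)`. -/
noncomputable def katDgen (ρ α β a : ℝ) (h : ℝ → ℝ) (t : ℝ) : ℝ :=
  katI ρ (β * (1 - α)) a
    (fun s => s ^ (ρ - 1) * deriv (katI ρ ((1 - β) * (1 - α)) a h) s) t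

/-!
Both sides are iterated integrals of
`Γ(α)⁻¹ t^(ρ-1) s^(ρ-1) ((t^ρ - s^ρ)/ρ)^(α-1) g(t) h(s)` over the triangle `a < s ≤ t ≤ b`,
taken in the two possible orders, so the identity is Fubini's theorem. The integrand is absolutely
integrable because the kernel is nonnegative with explicit inner integral
`∫_a^t s^(ρ-1) ((t^ρ - s^ρ)/ρ)^(α-1) ds = ((t^ρ - a^ρ)/ρ)^α / α`, a continuous function of `t`,
while the remaining factors are continuous on `[a, b]²`.
-/

theorem integral_integral_swap_triangle {E : Type*} [NormedAddCommGroup E] [NormedSpace ℝ E]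
    {F : ℝ → ℝ → E} {a b : ℝ} (hab : a ≤ b)
    (hF : IntegrableOn ({p : ℝ × ℝ | p.2 ≤ p.1}.indicator (Function.uncurry F))
      (Ioc a b ×ˢ Ioc a b)) :
    ∫ t in a..b, ∫ s in a..t, F t s = ∫ s in a..b, ∫ t in s..b, F t s := by
  set G := {p : ℝ × ℝ | p.2 ≤ p.1}.indicator (Function.uncurry F)
  have hleft : ∀ t ∈ Ioc a b, ∫ s in a..t, F t s = ∫ s in Ioc a b, G (t, s) := fun t ht =>
    (intervalIntegral.integral_indicator ⟨ht.1.le, ht.2⟩).symm.trans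
      (intervalIntegral.integral_of_le hab)
  have hright : ∀ s ∈ Ioc a b, ∫ t in s..b, F t s = ∫ t in Ioc a b, G (t, s) := by
    intro s hs
    have hslice : Ici s ∩ Ioc a b = Icc s b := by
      ext t
      simp only [mem_inter_iff, mem_Ici, mem_Ioc, mem_Icc]
      constructor
      · rintro ⟨hst, -, htb⟩; exact ⟨hst, htb⟩
      · rintro ⟨hst, htb⟩; exact ⟨hst, hs.1.trans_le hst, htb⟩
    rw [intervalIntegral.integral_of_le hs.2, ← integral_Icc_eq_integral_Ioc, ← hslice,
      ← Measure.restrict_restrict measurableSet_Ici, ← integral_indicator measurableSet_Ici]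
    rfl
  rw [IntegrableOn, Measure.volume_eq_prod, ← Measure.prod_restrict] at hF
  rw [intervalIntegral.integral_of_le hab, intervalIntegral.integral_of_le hab,
    setIntegral_congr_fun measurableSet_Ioc hleft, setIntegral_congr_fun measurableSet_Ioc hright]
  exact integral_integral_swap (f := fun t s => G (t, s)) hF

noncomputable def katKernel (ρ α t s : ℝ) : ℝ :=
  s ^ (ρ - 1) * ((t ^ ρ - s ^ ρ) / ρ) ^ (α - 1)

section Kernel

variable {ρ α a t : ℝ}

lemma katKernel_nonneg (hρ : 0 < ρ) {s : ℝ} (hs : 0 ≤ s) (hst : s ≤ t) :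
    0 ≤ katKernel ρ α t s := by
  have hpow : s ^ ρ ≤ t ^ ρ := Real.rpow_le_rpow hs hst hρ.le
  have hbase : 0 ≤ (t ^ ρ - s ^ ρ) / ρ := div_nonneg (sub_nonneg.mpr hpow) hρ.le
  exact mul_nonneg (Real.rpow_nonneg hs _) (Real.rpow_nonneg hbase _)

lemma hasDerivAt_katKernel_primitive (hρ : 0 < ρ) (hα : α ≠ 0) {s : ℝ} (hs : 0 < s)
    (hst : s < t) :
    HasDerivAt (fun s => -((t ^ ρ - s ^ ρ) / ρ) ^ α / α) (katKernel ρ α t s) s := by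
  have hbase : HasDerivAt (fun s : ℝ => (t ^ ρ - s ^ ρ) / ρ) (-s ^ (ρ - 1)) s := by
    have := ((hasDerivAt_const s (t ^ ρ)).sub
      (Real.hasDerivAt_rpow_const (p := ρ) (Or.inl hs.ne'))).div_const ρ
    refine this.congr_deriv ?_
    field_simp
    ring
  have hbase_pos : 0 < (t ^ ρ - s ^ ρ) / ρ :=
    div_pos (sub_pos.mpr (Real.rpow_lt_rpow hs.le hst hρ)) hρ
  refine ((hbase.rpow_const (p := α) (Or.inl hbase_pos.ne')).neg.div_const α).congr_deriv ?_
  rw [katKernel]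
  field_simp

lemma integrableOn_katKernel (hρ : 0 < ρ) (hα : 0 < α) (ha : 0 ≤ a) :
    IntegrableOn (katKernel ρ α t) (Ioc a t) :=
  intervalIntegral.integrableOn_deriv_of_nonneg (by fun_prop (disch := positivity))
    (fun _ hs => hasDerivAt_katKernel_primitive hρ hα.ne' (ha.trans_lt hs.1) hs.2)
    (fun _ hs => katKernel_nonneg hρ (ha.trans hs.1.le) hs.2.le)

lemma integral_katKernel (hρ : 0 < ρ) (hα : 0 < α) (ha : 0 ≤ a) (hat : a ≤ t) :
    ∫ s in a..t, katKernel ρ α t s = ((t ^ ρ - a ^ ρ) / ρ) ^ α / α := by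
  rw [intervalIntegral.integral_eq_sub_of_hasDerivAt_of_le hat
    (by fun_prop (disch := positivity))
    (fun _ hs => hasDerivAt_katKernel_primitive hρ hα.ne' (ha.trans_lt hs.1) hs.2)
    ((intervalIntegrable_iff_integrableOn_Ioc_of_le hat).mpr (integrableOn_katKernel hρ hα ha))]
  simp only [sub_self, zero_div, Real.zero_rpow hα.ne']
  ring

end Kernel

theorem integrableOn_indicator_katKernel {ρ α a b : ℝ} (hρ : 0 < ρ) (hα : 0 < α) (ha : 0 ≤ a) :
    IntegrableOn ({p : ℝ × ℝ | p.2 ≤ p.1}.indicator fun p => katKernel ρ α p.1 p.2)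
      (Ioc a b ×ˢ Ioc a b) := by
  set K := {p : ℝ × ℝ | p.2 ≤ p.1}.indicator fun p => katKernel ρ α p.1 p.2
  have hK : Measurable K :=
    (by unfold katKernel; fun_prop : Measurable fun p : ℝ × ℝ => katKernel ρ α p.1 p.2).indicator
      (measurableSet_le measurable_snd measurable_fst)
  have hslice : ∀ t ∈ Ioc a b, IntegrableOn (fun s => K (t, s)) (Ioc a b) := by
    intro t ht
    change IntegrableOn ((Iic t).indicator (katKernel ρ α t)) (Ioc a b)
    rw [IntegrableOn, integrable_indicator_iff measurableSet_Iic, IntegrableOn,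
      Measure.restrict_restrict measurableSet_Iic, Iic_inter_Ioc_of_le ht.2]
    exact integrableOn_katKernel hρ hα ha
  have hslice_norm : ∀ t ∈ Ioc a b,
      ∫ s in Ioc a b, ‖K (t, s)‖ = ((t ^ ρ - a ^ ρ) / ρ) ^ α / α := by
    intro t ht
    calc ∫ s in Ioc a b, ‖K (t, s)‖
        = ∫ s in a..b, {s | s ≤ t}.indicator (fun s => ‖katKernel ρ α t s‖) s := by
          rw [intervalIntegral.integral_of_le (ht.1.le.trans ht.2)]
          simp only [K, norm_indicator_eq_indicator_norm]
          rfl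
      _ = ∫ s in a..t, katKernel ρ α t s := by
          rw [intervalIntegral.integral_indicator ⟨ht.1.le, ht.2⟩]
          refine intervalIntegral.integral_congr fun s hs => ?_
          rw [uIcc_of_le ht.1.le] at hs
          exact Real.norm_of_nonneg (katKernel_nonneg hρ (ha.trans hs.1) hs.2)
      _ = ((t ^ ρ - a ^ ρ) / ρ) ^ α / α := integral_katKernel hρ hα ha ht.1.le
  rw [IntegrableOn, Measure.volume_eq_prod, ← Measure.prod_restrict,
    integrable_prod_iff hK.aestronglyMeasurable]
  refine ⟨(ae_restrict_iff' measurableSet_Ioc).mpr (.of_forall hslice), ?_⟩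
  have hcont : Continuous fun t : ℝ => ((t ^ ρ - a ^ ρ) / ρ) ^ α / α := by
    fun_prop (disch := positivity)
  exact (hcont.integrableOn_Icc.mono_set Ioc_subset_Icc_self).congr_fun
    (fun t ht => (hslice_norm t ht).symm) measurableSet_Ioc

theorem integrableOn_indicator_mul_katKernel {ρ α a b : ℝ} {φ : ℝ × ℝ → ℝ} (hρ : 0 < ρ)
    (hα : 0 < α) (ha : 0 ≤ a) (hφ : ContinuousOn φ (Icc a b ×ˢ Icc a b)) :
    IntegrableOn ({p : ℝ × ℝ | p.2 ≤ p.1}.indicator fun p => φ p * katKernel ρ α p.1 p.2)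
      (Ioc a b ×ˢ Ioc a b) := by
  rw [show ({p : ℝ × ℝ | p.2 ≤ p.1}.indicator fun p => φ p * katKernel ρ α p.1 p.2) =
      fun p => φ p * {p : ℝ × ℝ | p.2 ≤ p.1}.indicator (fun p => katKernel ρ α p.1 p.2) p from
    funext fun p => indicator_mul_right _ φ _]
  exact (integrableOn_indicator_katKernel hρ hα ha).continuousOn_mul_of_subset hφ
    (isCompact_Icc.prod isCompact_Icc) (measurableSet_Ioc.prod measurableSet_Ioc)
    (prod_mono Ioc_subset_Icc_self Ioc_subset_Icc_self)

/-- Fractional integration by parts for Katugampola fractional integrals: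
`∫_a^b t^(ρ-1) g(t) (^ρI_{a+}^α h)(t) dt = ∫_a^b t^(ρ-1) h(t) (^ρI_{b-}^α g)(t) dt`. -/
theorem katugampola_integration_by_parts
    (ρ α a b : ℝ) (hρ : 0 < ρ) (hα : 0 < α) (ha : 0 < a) (hab : a < b)
    (g h : ℝ → ℝ)
    (hg : ContinuousOn g (Set.Icc a b)) (hh : ContinuousOn h (Set.Icc a b)) :
    ∫ t in a..b, t ^ (ρ - 1) * g t * katI ρ α a h t
      = ∫ t in a..b, t ^ (ρ - 1) * h t * katIr ρ α b g t := by
  set φ : ℝ × ℝ → ℝ := fun p => p.1 ^ (ρ - 1) * g p.1 * (1 / Gamma α) * h p.2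
  set F : ℝ → ℝ → ℝ := fun t s => φ (t, s) * katKernel ρ α t s
  have hleft : ∀ t, t ^ (ρ - 1) * g t * katI ρ α a h t = ∫ s in a..t, F t s := by
    intro t
    rw [katI, ← mul_assoc, ← intervalIntegral.integral_const_mul]
    congr 1 with s
    simp only [F, φ, katKernel]
    ring
  have hright : ∀ s, ∫ t in s..b, F t s = s ^ (ρ - 1) * h s * katIr ρ α b g s := by
    intro s
    rw [katIr, ← mul_assoc, ← intervalIntegral.integral_const_mul]
    congr 1 with t
    simp only [F, φ, katKernel]
    ring
  have hφ : ContinuousOn φ (Icc a b ×ˢ Icc a b) := by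
    have hpow : ContinuousOn (fun t : ℝ => t ^ (ρ - 1)) (Icc a b) :=
      continuousOn_id.rpow_const fun t ht => Or.inl (ha.trans_le ht.1).ne'
    exact (((hpow.comp continuousOn_fst fun p hp => hp.1).mul
      (hg.comp continuousOn_fst fun p hp => hp.1)).mul continuousOn_const).mul
      (hh.comp continuousOn_snd fun p hp => hp.2)
  simp_rw [hleft, integral_integral_swap_triangle (F := F) hab.le
    (integrableOn_indicator_mul_katKernel hρ hα ha.le hφ), hright]
end

section
/- Let ρ > 0, α > 0, σ > 0 and 0 < a. Then for every t > a, (^ρI_{a+}^{α} h)(t) = (Γ(σ)/Γ(σ + α)) · ((t^ρ − a^ρ)/ρ)^{α + σ − 1}, where h(s) = ((s^ρ − a^ρ)/ρ)^{σ − 1}. -/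
/-!
The substitution `x = s^ρ/ρ`, with `dx = s^(ρ-1) ds`, turns the Katugampola integral of
`((s^ρ - a^ρ)/ρ)^(σ-1)` into the Riemann–Liouville integral
`∫_A^B (x - A)^(σ-1) (B - x)^(α-1) dx` with `A = a^ρ/ρ`, `B = t^ρ/ρ`. The affine change
`x = A + (B - A) y` reduces this to `(B - A)^(α+σ-1)` times the Beta integral `B(σ, α)`,
and `B(σ, α) Γ(σ + α) = Γ(σ) Γ(α)`.
-/

open MeasureTheory Real Set Filter

theorem integral_rpow_mul_sub_rpow {u v T : ℝ} (hu : 0 < u) (hv : 0 < v) (hT : 0 < T) :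
    ∫ x in (0 : ℝ)..T, x ^ (u - 1) * (T - x) ^ (v - 1)
      = T ^ (u + v - 1) * (Gamma u * Gamma v / Gamma (u + v)) := by
  apply Complex.ofReal_injective
  have hbeta := Complex.betaIntegral_scaled u v hT
  rw [Complex.betaIntegral_eq_Gamma_mul_div _ _ (by simpa) (by simpa)] at hbeta
  rw [← intervalIntegral.integral_ofReal]
  push_cast
  rw [Complex.ofReal_cpow hT.le]
  simp only [← Complex.Gamma_ofReal, Complex.ofReal_sub, Complex.ofReal_add, Complex.ofReal_one]
  rw [← hbeta]
  refine intervalIntegral.integral_congr fun x hx => ?_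
  rw [uIcc_of_le hT.le] at hx
  rw [Complex.ofReal_cpow hx.1, Complex.ofReal_cpow (sub_nonneg.2 hx.2)]
  push_cast
  rfl

theorem integral_sub_rpow_mul_sub_rpow {u v A B : ℝ} (hu : 0 < u) (hv : 0 < v) (hAB : A < B) :
    ∫ x in A..B, (x - A) ^ (u - 1) * (B - x) ^ (v - 1)
      = (B - A) ^ (u + v - 1) * (Gamma u * Gamma v / Gamma (u + v)) := by
  have hshift := intervalIntegral.integral_comp_sub_right
    (fun x => x ^ (u - 1) * (B - A - x) ^ (v - 1)) A (a := A) (b := B)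
  simp only [sub_self, sub_sub_sub_cancel_right] at hshift
  rw [hshift, integral_rpow_mul_sub_rpow hu hv (sub_pos.2 hAB)]

theorem integral_rpow_sub_one_mul_comp_rpow_div {ρ a t : ℝ} (hρ : 0 < ρ) (ha : 0 ≤ a)
    (hat : a ≤ t) (f : ℝ → ℝ) :
    ∫ s in a..t, s ^ (ρ - 1) * f (s ^ ρ / ρ) = ∫ x in a ^ ρ / ρ..t ^ ρ / ρ, f x := by
  set φ : ℝ → ℝ := fun s => s ^ ρ / ρ
  have hmono : StrictMonoOn φ (Ici 0) := fun x hx y _ hxy => by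
    simp only [φ]; gcongr
  have hpos : Ioo a t ⊆ Ici 0 := fun s hs => ha.trans hs.1.le
  have himage : φ '' Ioo a t = Ioo (φ a) (φ t) := by
    refine Subset.antisymm ?_ (intermediate_value_Ioo hat ?_)
    · rintro _ ⟨s, hs, rfl⟩
      exact ⟨hmono ha (hpos hs) hs.1, hmono (hpos hs) (ha.trans hat) hs.2⟩
    · exact (continuousOn_id.rpow_const fun _ _ => Or.inr hρ.le).div_const ρ
  have hderiv : ∀ s ∈ Ioo a t, HasDerivWithinAt φ (s ^ (ρ - 1)) (Ioo a t) s := fun s hs => by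
    have := ((Real.hasDerivAt_rpow_const (p := ρ) (Or.inl (ha.trans_lt hs.1).ne')).div_const ρ)
    rw [mul_div_cancel_left₀ _ hρ.ne'] at this
    exact this.hasDerivWithinAt
  -- The image formula for injective maps asks nothing of `f`, which in our application has
  -- integrable singularities at both endpoints.
  rw [intervalIntegral.integral_of_le hat,
    intervalIntegral.integral_of_le (hmono.monotoneOn ha (ha.trans hat) hat),
    integral_Ioc_eq_integral_Ioo, integral_Ioc_eq_integral_Ioo, ← himage,
    integral_image_eq_integral_abs_deriv_smul measurableSet_Ioo hderiv (hmono.injOn.mono hpos)]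
  refine setIntegral_congr_fun measurableSet_Ioo fun s hs => ?_
  rw [abs_of_nonneg (Real.rpow_nonneg (hpos hs) _), smul_eq_mul]

/-- Katugampola fractional integral of a power function:
`(^ρI_{a+}^α ((·^ρ - a^ρ)/ρ)^(σ-1))(t) = (Γ(σ)/Γ(σ+α)) ((t^ρ - a^ρ)/ρ)^(α+σ-1)`. -/
theorem katI_power
    (ρ α σ a : ℝ) (hρ : 0 < ρ) (hα : 0 < α) (hσ : 0 < σ) (ha : 0 < a)
    (t : ℝ) (ht : a < t) :
    katI ρ α a (fun s => ((s ^ ρ - a ^ ρ) / ρ) ^ (σ - 1)) t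
      = (Real.Gamma σ / Real.Gamma (σ + α)) * ((t ^ ρ - a ^ ρ) / ρ) ^ (α + σ - 1) := by
  have hAB : a ^ ρ / ρ < t ^ ρ / ρ := by gcongr
  set kernel : ℝ → ℝ := fun x => (x - a ^ ρ / ρ) ^ (σ - 1) * (t ^ ρ / ρ - x) ^ (α - 1)
  have hintegrand : (fun s => s ^ (ρ - 1) * ((t ^ ρ - s ^ ρ) / ρ) ^ (α - 1)
      * ((s ^ ρ - a ^ ρ) / ρ) ^ (σ - 1)) = fun s => s ^ (ρ - 1) * kernel (s ^ ρ / ρ) := by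
    ext s; simp only [kernel, sub_div]; ring
  rw [katI, hintegrand, integral_rpow_sub_one_mul_comp_rpow_div hρ ha.le ht.le kernel,
    integral_sub_rpow_mul_sub_rpow hσ hα hAB, ← sub_div, add_comm σ α]
  field_simp [(Gamma_pos_of_pos hα).ne']
end

section
/- Let ρ > 0, α > 0, β > 0 and 0 < a < b < ∞, and let h : ℝ → ℝ be continuous on [a, b]. Then for every t ∈ (a, b], (^ρI_{a+}^{α} (^ρI_{a+}^{β} h))(t) = (^ρI_{a+}^{α+β} h)(t). -/
/-!
The substitution `u = s ^ ρ / ρ` turns `^ρI_{a+}^γ h` at `t` into the Riemann–Liouville integral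
of order `γ`, from `a ^ ρ / ρ` to `t ^ ρ / ρ`, of `u ↦ h ((ρ u) ^ (1/ρ))`. So it suffices to prove
the semigroup law of the Riemann–Liouville integral. Exchanging the order of integration over the
triangle `A < u < s < T` reduces that law to the Beta integral
`∫_u^T (T - s)^(α-1) (s - u)^(β-1) ds = Γ(α) Γ(β) / Γ(α + β) · (T - u)^(α+β-1)`.
-/

open MeasureTheory Real Set Filter

open Function
open scoped Interval

noncomputable def riemannLiouville (α A : ℝ) (g : ℝ → ℝ) (T : ℝ) : ℝ :=
  (1 / Gamma α) * ∫ u in A..T, (T - u) ^ (α - 1) * g u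

lemma riemannLiouville_congr {α A T : ℝ} {f g : ℝ → ℝ} (hfg : EqOn f g (uIcc A T)) :
    riemannLiouville α A f T = riemannLiouville α A g T := by
  simp only [riemannLiouville]
  congr 1
  exact intervalIntegral.integral_congr fun u hu => by rw [hfg hu]

theorem integral_sub_rpow_mul_sub_rpow_s4 {α β u t : ℝ} (hα : 0 < α) (hβ : 0 < β) (hut : u < t) :
    ∫ s in u..t, (t - s) ^ (α - 1) * (s - u) ^ (β - 1)
      = Gamma α * Gamma β / Gamma (α + β) * (t - u) ^ (α + β - 1) := by
  have hshift : ∫ s in u..t, (t - s) ^ (α - 1) * (s - u) ^ (β - 1)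
      = ∫ x in (0 : ℝ)..t - u, x ^ (β - 1) * (t - u - x) ^ (α - 1) := by
    rw [← sub_self u, ← intervalIntegral.integral_comp_sub_right]
    exact intervalIntegral.integral_congr fun s _ => by ring_nf
  have hbeta := Complex.betaIntegral_scaled β α (sub_pos.2 hut)
  rw [Complex.betaIntegral_eq_Gamma_mul_div _ _ (by simpa) (by simpa)] at hbeta
  apply Complex.ofReal_injective
  rw [hshift, ← intervalIntegral.integral_ofReal]
  have hcongr : ∀ x ∈ uIcc 0 (t - u), ((x ^ (β - 1) * (t - u - x) ^ (α - 1) : ℝ) : ℂ)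
      = (x : ℂ) ^ ((β : ℂ) - 1) * (((t - u : ℝ) : ℂ) - x) ^ ((α : ℂ) - 1) := by
    intro x hx
    rw [uIcc_of_le (sub_pos.2 hut).le] at hx
    push_cast [Complex.ofReal_cpow hx.1, Complex.ofReal_cpow (sub_nonneg.2 hx.2)]
    ring_nf
  rw [intervalIntegral.integral_congr hcongr, hbeta]
  push_cast [Complex.ofReal_cpow (sub_pos.2 hut).le, ← Complex.Gamma_ofReal]
  ring_nf

section Triangle

variable {E : Type*} [NormedAddCommGroup E] {A T : ℝ}

lemma setIntegral_Ioc_ite_lt [NormedSpace ℝ E] {s : ℝ} (hs : s ∈ Ioc A T) (f : ℝ → E) :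
    ∫ u in Ioc A T, (if u < s then f u else 0) = ∫ u in A..s, f u := by
  have hset : Ioc A T ∩ Iio s = Ioo A s := by
    ext u; simp only [mem_inter_iff, mem_Ioc, mem_Iio, mem_Ioo]; grind
  have hind : (fun u => if u < s then f u else 0) = (Iio s).indicator f := by
    ext u; simp [indicator_apply]
  rw [hind, setIntegral_indicator measurableSet_Iio, hset,
    intervalIntegral.integral_of_le hs.1.le, integral_Ioc_eq_integral_Ioo]

lemma integrableOn_Ioc_ite_lt {s : ℝ} {f : ℝ → E}
    (hf : IntervalIntegrable f volume A s) :
    IntegrableOn (fun u => if u < s then f u else 0) (Ioc A T) := by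
  have hind : (fun u => if u < s then f u else 0) = (Iio s).indicator f := by
    ext u; simp [indicator_apply]
  rw [hind, IntegrableOn, integrable_indicator_iff measurableSet_Iio, IntegrableOn,
    Measure.restrict_restrict measurableSet_Iio]
  exact (hf.1.mono_set fun u hu => ⟨hu.2.1, hu.1.le⟩)

lemma setIntegral_Ioc_ite_gt [NormedSpace ℝ E] {u : ℝ} (hu : u ∈ Ioc A T) (f : ℝ → E) :
    ∫ s in Ioc A T, (if u < s then f s else 0) = ∫ s in u..T, f s := by
  have hset : Ioc A T ∩ Ioi u = Ioc u T := by
    ext s; simp only [mem_inter_iff, mem_Ioc, mem_Ioi]; grind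
  have hind : (fun s => if u < s then f s else 0) = (Ioi u).indicator f := by
    ext s; simp [indicator_apply]
  rw [hind, setIntegral_indicator measurableSet_Ioi, hset, intervalIntegral.integral_of_le hu.2]

theorem intervalIntegral_integral_swap_of_lt [NormedSpace ℝ E] (hAT : A ≤ T) {F : ℝ → ℝ → E}
    (hF : Integrable (uncurry fun s u => if u < s then F s u else 0)
      ((volume.restrict (Ioc A T)).prod (volume.restrict (Ioc A T)))) :
    ∫ s in A..T, ∫ u in A..s, F s u = ∫ u in A..T, ∫ s in u..T, F s u := by
  rw [intervalIntegral.integral_of_le hAT, intervalIntegral.integral_of_le hAT,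
    setIntegral_congr_fun measurableSet_Ioc fun s hs => (setIntegral_Ioc_ite_lt hs (F s)).symm,
    setIntegral_congr_fun measurableSet_Ioc fun u hu => (setIntegral_Ioc_ite_gt hu (F · u)).symm]
  exact integral_integral_swap hF

end Triangle

lemma intervalIntegrable_sub_rpow {β : ℝ} (hβ : 0 < β) (A s : ℝ) :
    IntervalIntegrable (fun u => (s - u) ^ (β - 1)) volume A s := by
  simpa using ((intervalIntegral.intervalIntegrable_rpow' (by linarith : -1 < β - 1)
    (a := 0) (b := s - A)).comp_sub_left s).symm

lemma integral_sub_rpow {β A s : ℝ} (hβ : 0 < β) :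
    ∫ u in A..s, (s - u) ^ (β - 1) = (s - A) ^ β / β := by
  rw [intervalIntegral.integral_comp_sub_left (fun x => x ^ (β - 1)) s, sub_self,
    integral_rpow (Or.inl (by linarith)), zero_rpow (by linarith), sub_add_cancel, sub_zero]

theorem integrable_rpow_kernel {α β A T : ℝ} (hα : 0 < α) (hβ : 0 < β) :
    Integrable (uncurry fun s u => if u < s then (T - s) ^ (α - 1) * (s - u) ^ (β - 1) else 0)
      ((volume.restrict (Ioc A T)).prod (volume.restrict (Ioc A T))) := by
  have hmeas : Measurable (uncurry fun s u : ℝ =>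
      if u < s then (T - s) ^ (α - 1) * (s - u) ^ (β - 1) else 0) :=
    Measurable.ite (measurableSet_lt measurable_snd measurable_fst) (by fun_prop) measurable_const
  -- Integrating in `u` first, each fibre carries only the singularity of `(s - u) ^ (β - 1)`.
  refine (integrable_prod_iff hmeas.aestronglyMeasurable).2 ⟨?_, ?_⟩
  · exact Eventually.of_forall fun s => integrableOn_Ioc_ite_lt
      (f := fun u => (T - s) ^ (α - 1) * (s - u) ^ (β - 1))
      ((intervalIntegrable_sub_rpow hβ A s).const_mul _)
  · have hnorm : ∀ s ∈ Ioc A T, ∫ u in Ioc A T,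
        ‖if u < s then (T - s) ^ (α - 1) * (s - u) ^ (β - 1) else 0‖
          = (T - s) ^ (α - 1) * ((s - A) ^ β / β) := by
      intro s hs
      have hnonneg : ∀ u, ‖if u < s then (T - s) ^ (α - 1) * (s - u) ^ (β - 1) else 0‖
          = if u < s then (T - s) ^ (α - 1) * (s - u) ^ (β - 1) else 0 := by
        intro u
        split_ifs with hu
        · exact norm_of_nonneg (mul_nonneg (rpow_nonneg (by linarith [hs.2]) _)
            (rpow_nonneg (by linarith) _))
        · exact norm_zero
      simp_rw [hnonneg]
      rw [setIntegral_Ioc_ite_lt hs, intervalIntegral.integral_const_mul, integral_sub_rpow hβ]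
    refine (integrableOn_congr_fun (fun s hs => (hnorm s hs).symm) measurableSet_Ioc).1 ?_
    exact ((intervalIntegrable_sub_rpow hα A T).mul_continuousOn
      (((continuous_sub_right A).rpow_const fun _ => Or.inr hβ.le).div_const β).continuousOn).1

theorem riemannLiouville_riemannLiouville {α β A T : ℝ} (hα : 0 < α) (hβ : 0 < β) (hAT : A < T)
    {g : ℝ → ℝ} (hg : ContinuousOn g (Icc A T)) :
    riemannLiouville α A (riemannLiouville β A g) T = riemannLiouville (α + β) A g T := by
  set F : ℝ → ℝ → ℝ := fun s u => (T - s) ^ (α - 1) * (s - u) ^ (β - 1) * g u with hF_def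
  have hF : Integrable (uncurry fun s u => if u < s then F s u else 0)
      ((volume.restrict (Ioc A T)).prod (volume.restrict (Ioc A T))) := by
    obtain ⟨M, hM⟩ := isCompact_Icc.exists_bound_of_continuousOn hg
    have hg_meas : AEStronglyMeasurable g (volume.restrict (Ioc A T)) :=
      (hg.mono Ioc_subset_Icc_self).aestronglyMeasurable measurableSet_Ioc
    have hg_bound : ∀ᵐ p ∂(volume.restrict (Ioc A T)).prod (volume.restrict (Ioc A T)),
        ‖g p.2‖ ≤ M :=
      Measure.quasiMeasurePreserving_snd.ae
        ((ae_restrict_mem measurableSet_Ioc).mono fun u hu => hM u (Ioc_subset_Icc_self hu))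
    convert (integrable_rpow_kernel hα hβ).mul_bdd hg_meas.comp_snd hg_bound using 2 with p
    simp only [uncurry, hF_def]
    split_ifs <;> simp
  have hinner : ∀ᵐ u, u ∈ Ι A T → ∫ s in u..T, F s u
      = Gamma α * Gamma β / Gamma (α + β) * ((T - u) ^ (α + β - 1) * g u) := by
    -- `u = T` must be excluded: there the right side is `0 ^ 0 ≠ 0` when `α + β = 1`.
    filter_upwards [(countable_singleton T).ae_notMem volume] with u hu huAT
    have huT : u < T := lt_of_le_of_ne (uIoc_of_le hAT.le ▸ huAT).2 hu
    rw [intervalIntegral.integral_mul_const, integral_sub_rpow_mul_sub_rpow_s4 hα hβ huT]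
    ring
  have hΓ : Gamma (α + β) ≠ 0 := (Gamma_pos_of_pos (add_pos hα hβ)).ne'
  calc riemannLiouville α A (riemannLiouville β A g) T
      = 1 / Gamma α * (1 / Gamma β) * ∫ s in A..T, ∫ u in A..s, F s u := by
        simp only [riemannLiouville, hF_def, mul_assoc, ← intervalIntegral.integral_const_mul]
        exact intervalIntegral.integral_congr fun s _ =>
          intervalIntegral.integral_congr fun u _ => by ring
    _ = 1 / Gamma α * (1 / Gamma β) * ∫ u in A..T, ∫ s in u..T, F s u := by
        rw [intervalIntegral_integral_swap_of_lt hAT.le hF]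
    _ = riemannLiouville (α + β) A g T := by
        rw [intervalIntegral.integral_congr_ae hinner, intervalIntegral.integral_const_mul,
          riemannLiouville]
        field_simp

lemma hasDerivAt_rpow_div_self {ρ s : ℝ} (hρ : ρ ≠ 0) (hs : 0 < s) :
    HasDerivAt (fun s => s ^ ρ / ρ) (s ^ (ρ - 1)) s := by
  simpa [mul_div_cancel_left₀ _ hρ] using
    (hasDerivAt_rpow_const (p := ρ) (Or.inl hs.ne')).div_const ρ

lemma katI_eq_riemannLiouville {ρ a x : ℝ} (hρ : 0 < ρ) (ha : 0 < a) (hax : a ≤ x) (γ : ℝ)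
    (f : ℝ → ℝ) :
    katI ρ γ a f x = riemannLiouville γ (a ^ ρ / ρ) (fun u => f ((ρ * u) ^ ρ⁻¹)) (x ^ ρ / ρ) := by
  have hmin : min a x = a := min_eq_left hax
  rw [katI, riemannLiouville, ← intervalIntegral.integral_comp_mul_deriv_of_deriv_nonneg
    (f := fun s => s ^ ρ / ρ) (f' := fun s => s ^ (ρ - 1))]
  · congr 1
    refine intervalIntegral.integral_congr fun s hs => ?_
    have hs0 : 0 ≤ s := ha.le.trans (uIcc_of_le hax ▸ hs).1
    simp only [Function.comp_apply, mul_div_cancel₀ _ hρ.ne', rpow_rpow_inv hs0 hρ.ne']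
    rw [sub_div]
    ring
  · exact fun s hs => (hasDerivAt_rpow_div_self hρ.ne'
      (ha.trans_le (uIcc_of_le hax ▸ hs).1)).continuousAt.continuousWithinAt
  · exact fun s hs => hasDerivAt_rpow_div_self hρ.ne' (ha.trans (hmin ▸ hs.1))
  · exact fun s hs => (rpow_pos_of_pos (ha.trans (hmin ▸ hs.1)) _).le

lemma mul_rpow_inv_rpow_div_self {ρ x : ℝ} (hρ : 0 < ρ) (hx : 0 ≤ x) :
    (ρ * (x ^ ρ / ρ)) ^ ρ⁻¹ = x := by
  rw [mul_div_cancel₀ _ hρ.ne', rpow_rpow_inv hx hρ.ne']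

lemma rpow_div_self_mul_rpow_inv {ρ w : ℝ} (hρ : 0 < ρ) (hw : 0 ≤ w) :
    ((ρ * w) ^ ρ⁻¹) ^ ρ / ρ = w := by
  rw [rpow_inv_rpow (by positivity) hρ.ne', mul_div_cancel_left₀ _ hρ.ne']

lemma mapsTo_mul_rpow_inv {ρ a t : ℝ} (hρ : 0 < ρ) (ha : 0 ≤ a) (ht : 0 ≤ t) :
    MapsTo (fun w => (ρ * w) ^ ρ⁻¹) (Icc (a ^ ρ / ρ) (t ^ ρ / ρ)) (Icc a t) := by
  intro w hw
  have hmono : ∀ {x y : ℝ}, 0 ≤ x → x ≤ y → (ρ * x) ^ ρ⁻¹ ≤ (ρ * y) ^ ρ⁻¹ := fun hx hxy =>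
    rpow_le_rpow (by positivity) (by gcongr) (by positivity)
  have hA : 0 ≤ a ^ ρ / ρ := by positivity
  constructor
  · simpa only [mul_rpow_inv_rpow_div_self hρ ha] using hmono hA hw.1
  · simpa only [mul_rpow_inv_rpow_div_self hρ ht] using hmono (hA.trans hw.1) hw.2

theorem katI_semigroup_general
    (ρ α β a b : ℝ) (hρ : 0 < ρ) (hα : 0 < α) (hβ : 0 < β)
    (ha : 0 < a)
    (h : ℝ → ℝ) (hh : ContinuousOn h (Set.Icc a b)) :
    ∀ t ∈ Set.Ioc a b,
      katI ρ α a (katI ρ β a h) t = katI ρ (α + β) a h t := by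
  intro t ht
  have hAT : a ^ ρ / ρ < t ^ ρ / ρ := by gcongr; exact ht.1
  have hψ := mapsTo_mul_rpow_inv hρ ha.le (ha.trans ht.1).le
  have hg : ContinuousOn (fun u => h ((ρ * u) ^ ρ⁻¹)) (Icc (a ^ ρ / ρ) (t ^ ρ / ρ)) :=
    hh.comp ((continuous_const.mul continuous_id).rpow_const
      fun _ => Or.inr (inv_nonneg.2 hρ.le)).continuousOn
      (hψ.mono_right (Icc_subset_Icc_right ht.2))
  have hinner : EqOn (fun w => katI ρ β a h ((ρ * w) ^ ρ⁻¹))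
      (riemannLiouville β (a ^ ρ / ρ) fun u => h ((ρ * u) ^ ρ⁻¹))
      (uIcc (a ^ ρ / ρ) (t ^ ρ / ρ)) := fun w hw => by
    rw [uIcc_of_le hAT.le] at hw
    dsimp only
    rw [katI_eq_riemannLiouville hρ ha (hψ hw).1,
      rpow_div_self_mul_rpow_inv hρ ((by positivity : (0 : ℝ) ≤ a ^ ρ / ρ).trans hw.1)]
  rw [katI_eq_riemannLiouville hρ ha ht.1.le, katI_eq_riemannLiouville hρ ha ht.1.le,
    riemannLiouville_congr hinner, riemannLiouville_riemannLiouville hα hβ hAT hg]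

/-- Semigroup property of the Katugampola fractional integral:
`^ρI_{a+}^α (^ρI_{a+}^β h) = ^ρI_{a+}^{α+β} h` on `(a, b]`. -/
theorem katI_semigroup
    (ρ α β a b : ℝ) (hρ : 0 < ρ) (hα : 0 < α) (hβ : 0 < β)
    (ha : 0 < a) (hab : a < b)
    (h : ℝ → ℝ) (hh : ContinuousOn h (Set.Icc a b)) :
    ∀ t ∈ Set.Ioc a b,
      katI ρ α a (katI ρ β a h) t = katI ρ (α + β) a h t :=
  katI_semigroup_general ρ α β a b hρ hα hβ ha h hh
end

section
/- Let ρ > 0, 0 < a, 0 < α < 1, 0 ≤ β ≤ 1, γ = α + β(1 − α), λ > 0, μ ≥ 0 and m > 1 with m > (1 + μ)/(1 − α). Set ν = (α + μ)/(1 − m) and assume ν > γ − 1. Define y(t) = [Γ(ν + 1)/(λ Γ(ν − α + 1))]^{1/(m−1)} · ((t^ρ − a^ρ)/ρ)^{ν}. Then lim_{t→a+} (^ρI_{a+}^{1−γ} y)(t) = 0; that is, y satisfies the initial condition (^ρI_{a+}^{1−γ} y)(a+) = 0. -/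
open MeasureTheory Real Set Filter

/- The Katugampola integral is the Riemann–Liouville integral transported along
`x = (s^ρ - a^ρ)/ρ`; the power function `((t^ρ - a^ρ)/ρ)^ν` becomes `x^ν`, whose integral of
order `1 - γ` is a constant (a Beta integral) times `x^(ν + 1 - γ)`. Since `ν + 1 - γ > 0` this
tends to `0` as `t → a+`. -/

lemma katI_const_mul (ρ δ a c : ℝ) (h : ℝ → ℝ) (t : ℝ) :
    katI ρ δ a (fun u => c * h u) t = c * katI ρ δ a h t := by
  rw [katI, katI, mul_left_comm, ← intervalIntegral.integral_const_mul c]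
  congr 2
  funext s
  ring

lemma hasDerivAt_rpow_sub_div {ρ a s : ℝ} (hρ : ρ ≠ 0) (hs : s ≠ 0) :
    HasDerivAt (fun s => (s ^ ρ - a ^ ρ) / ρ) (s ^ (ρ - 1)) s := by
  simpa only [mul_div_cancel_left₀ _ hρ] using
    ((hasDerivAt_rpow_const (p := ρ) (Or.inl hs)).sub_const (a ^ ρ)).div_const ρ

lemma rpow_sub_div_pos {ρ a t : ℝ} (hρ : ρ ≠ 0) (ha : 0 < a) (hat : a < t) :
    0 < (t ^ ρ - a ^ ρ) / ρ := by
  rcases hρ.lt_or_gt with hρ | hρ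
  · exact div_pos_of_neg_of_neg (sub_neg.2 (rpow_lt_rpow_of_neg ha hat hρ)) hρ
  · exact div_pos (sub_pos.2 (rpow_lt_rpow ha.le hat hρ)) hρ

lemma katI_comp_rpow_sub_div {ρ a t : ℝ} (δ : ℝ) (hρ : ρ ≠ 0) (ha : 0 < a) (hat : a ≤ t)
    (g : ℝ → ℝ) :
    katI ρ δ a (fun s => g ((s ^ ρ - a ^ ρ) / ρ)) t =
      1 / Gamma δ *
        ∫ x in 0..(t ^ ρ - a ^ ρ) / ρ, ((t ^ ρ - a ^ ρ) / ρ - x) ^ (δ - 1) * g x := by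
  set X := (t ^ ρ - a ^ ρ) / ρ
  have hpos : ∀ s ∈ uIcc a t, 0 < s := fun s hs =>
    (ha.trans_le (le_min le_rfl hat)).trans_le hs.1
  have hsub := intervalIntegral.integral_comp_mul_deriv_of_deriv_nonneg
    (f := fun s => (s ^ ρ - a ^ ρ) / ρ)
    (g := fun x => (X - x) ^ (δ - 1) * g x) (f' := fun s => s ^ (ρ - 1))
    (fun s hs => (hasDerivAt_rpow_sub_div hρ (hpos s hs).ne').continuousAt
      |>.continuousWithinAt)
    (fun s hs => hasDerivAt_rpow_sub_div hρ (hpos s (Ioo_subset_Icc_self hs)).ne')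
    (fun s hs => (rpow_pos_of_pos (hpos s (Ioo_subset_Icc_self hs)) _).le)
  simp only [sub_self, zero_div] at hsub
  rw [katI, ← hsub]
  congr 1
  refine intervalIntegral.integral_congr fun s _ => ?_
  simp only [Function.comp, X]
  ring_nf

lemma integral_sub_rpow_mul_rpow_eq {X : ℝ} (hX : 0 < X) (δ ν : ℝ) :
    ∫ x in 0..X, (X - x) ^ (δ - 1) * x ^ ν =
      X ^ (ν + δ) * ∫ y in 0..1, (1 - y) ^ (δ - 1) * y ^ ν := by
  have hscale := intervalIntegral.integral_comp_mul_left
    (fun x => (X - x) ^ (δ - 1) * x ^ ν) hX.ne' (a := 0) (b := 1)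
  simp only [mul_zero, mul_one, smul_eq_mul] at hscale
  have hhom : ∀ y ∈ uIcc (0 : ℝ) 1, (X - X * y) ^ (δ - 1) * (X * y) ^ ν =
      X ^ (δ - 1 + ν) * ((1 - y) ^ (δ - 1) * y ^ ν) := by
    intro y hy
    rw [uIcc_of_le zero_le_one] at hy
    rw [show X - X * y = X * (1 - y) by ring, mul_rpow hX.le (by linarith [hy.2]),
      mul_rpow hX.le hy.1, rpow_add hX]
    ring
  rw [intervalIntegral.integral_congr hhom, intervalIntegral.integral_const_mul] at hscale
  rw [show ν + δ = 1 + (δ - 1 + ν) by ring, rpow_add hX, rpow_one, mul_assoc, hscale,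
    mul_inv_cancel_left₀ hX.ne']

lemma katI_rpow_sub_div_rpow {ρ a t : ℝ} (δ ν : ℝ) (hρ : ρ ≠ 0) (ha : 0 < a)
    (hat : a < t) :
    katI ρ δ a (fun s => ((s ^ ρ - a ^ ρ) / ρ) ^ ν) t =
      1 / Gamma δ * (∫ y in 0..1, (1 - y) ^ (δ - 1) * y ^ ν) *
        ((t ^ ρ - a ^ ρ) / ρ) ^ (ν + δ) := by
  rw [katI_comp_rpow_sub_div δ hρ ha hat.le (· ^ ν),
    integral_sub_rpow_mul_rpow_eq (rpow_sub_div_pos hρ ha hat)]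
  ring

lemma tendsto_rpow_sub_div_rpow_nhds_zero {ρ a p : ℝ} (ha : a ≠ 0) (hp : 0 < p) :
    Tendsto (fun t => ((t ^ ρ - a ^ ρ) / ρ) ^ p) (nhds a) (nhds 0) := by
  have hcont : ContinuousAt (fun t => ((t ^ ρ - a ^ ρ) / ρ) ^ p) a :=
    (((continuousAt_rpow_const a ρ (Or.inl ha)).sub continuousAt_const).div_const ρ).rpow_const
      (Or.inr hp.le)
  simpa [zero_rpow hp.ne'] using hcont.tendsto

theorem exact_solution_initial_condition_general
    (ρ a α γ lam m ν : ℝ) (hρ : 0 < ρ) (ha : 0 < a)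
    (hνγ : γ - 1 < ν) :
    Filter.Tendsto
      (katI ρ (1 - γ) a
        (fun u => (Real.Gamma (ν + 1) / (lam * Real.Gamma (ν - α + 1))) ^ (1 / (m - 1)) *
          ((u ^ ρ - a ^ ρ) / ρ) ^ ν))
      (nhdsWithin a (Set.Ioi a)) (nhds 0) := by
  set c := (Gamma (ν + 1) / (lam * Gamma (ν - α + 1))) ^ (1 / (m - 1))
  have hpow : Tendsto (fun t => ((t ^ ρ - a ^ ρ) / ρ) ^ (ν + (1 - γ))) (nhdsWithin a (Ioi a))
      (nhds 0) :=
    (tendsto_rpow_sub_div_rpow_nhds_zero ha.ne' (by linarith)).mono_left nhdsWithin_le_nhds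
  have hlim :=
    hpow.const_mul (c * (1 / Gamma (1 - γ) * ∫ y in 0..1, (1 - y) ^ (1 - γ - 1) * y ^ ν))
  rw [mul_zero] at hlim
  refine hlim.congr' ?_
  filter_upwards [self_mem_nhdsWithin] with t hat
  rw [katI_const_mul, katI_rpow_sub_div_rpow _ _ hρ.ne' ha hat, mul_assoc]

/-- The exact solution `y(t) = [Γ(ν+1)/(λ Γ(ν-α+1))]^(1/(m-1)) ((t^ρ-a^ρ)/ρ)^ν`
satisfies the initial condition `(^ρI_{a+}^{1-γ} y)(a+) = 0`. -/
theorem exact_solution_initial_condition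
    (ρ a α β γ lam μ m ν : ℝ) (hρ : 0 < ρ) (ha : 0 < a)
    (hα0 : 0 < α) (hα1 : α < 1) (hβ0 : 0 ≤ β) (hβ1 : β ≤ 1)
    (hγ : γ = α + β * (1 - α))
    (hlam : 0 < lam) (hμ : 0 ≤ μ) (hm1 : 1 < m) (hm2 : (1 + μ) / (1 - α) < m)
    (hν : ν = (α + μ) / (1 - m)) (hνγ : γ - 1 < ν) :
    Filter.Tendsto
      (katI ρ (1 - γ) a
        (fun u => (Real.Gamma (ν + 1) / (lam * Real.Gamma (ν - α + 1))) ^ (1 / (m - 1)) *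
          ((u ^ ρ - a ^ ρ) / ρ) ^ ν))
      (nhdsWithin a (Set.Ioi a)) (nhds 0) :=
  exact_solution_initial_condition_general ρ a α γ lam m ν hρ ha hνγ
end
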